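/- Let u ∈ W^{2,2}(Ω; ℝ³) be divergence-free and J a smooth mollification operator (convolution with a fixed smooth compactly supported kernel). Then curl(J(u)·∇u) = J(u)·∇(curl u) + v, where the components of v are vⁱ = ε_{ijk} ⟨(∇u)_k, (∇J(u))^j⟩, with (∇u)_k the k-th row of ∇u, (∇J(u))^j the j-th column of ∇J(u), ε the Levi–Civita symbol, and ⟨·,·⟩ the Euclidean inner product on ℝ³. -/

import Mathlib

open MeasureTheory

/-- Partial derivative `∂ᵢ f (x)`. -/
noncomputable def pd (f : (Fin 3 → ℝ) → ℝ) (i : Fin 3) (x : Fin 3 → ℝ) : ℝ :=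
  fderiv ℝ f x (Pi.single i 1)

/-- Levi–Civita symbol on `Fin 3`. -/
noncomputable def lc (i j k : Fin 3) : ℝ :=
  (((j : ℕ) : ℝ) - ((i : ℕ) : ℝ)) * (((k : ℕ) : ℝ) - ((j : ℕ) : ℝ)) *
    (((k : ℕ) : ℝ) - ((i : ℕ) : ℝ)) / 2

/-- Curl of a vector field on ℝ³: `(curl u)ᵢ = ε_{ijk} ∂ⱼ u_k`. -/
noncomputable def curl3 (u : (Fin 3 → ℝ) → (Fin 3 → ℝ)) (x : Fin 3 → ℝ) :
    Fin 3 → ℝ :=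
  fun i => ∑ j, ∑ k, lc i j k * pd (fun y => u y k) j x

/-- Directional derivative `(a·∇)u` of a vector field `u` along a field `a`. -/
noncomputable def dirDeriv (a u : (Fin 3 → ℝ) → (Fin 3 → ℝ)) (x : Fin 3 → ℝ) :
    Fin 3 → ℝ :=
  fun i => fderiv ℝ (fun y => u y i) x (a x)


open scoped Convolution

lemma fderiv_pi_apply' (f : (Fin 3 → ℝ) → ℝ) (x v : Fin 3 → ℝ) :
    fderiv ℝ f x v = ∑ l, v l * pd f l x := by
  have hv : v = ∑ l, v l • (Pi.single l 1 : Fin 3 → ℝ) := by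
    ext j; simp [Finset.sum_apply, Pi.single_apply]
  conv_lhs => rw [hv]
  rw [map_sum]
  simp [pd]

lemma sum_rearrange' (lcf : Fin 3 → Fin 3 → ℝ) (P Q : Fin 3 → Fin 3 → ℝ)
    (W : Fin 3 → ℝ) (A : Fin 3 → Fin 3 → Fin 3 → ℝ) :
    ∑ j, ∑ k, lcf j k * ∑ l, (P j l * Q k l + W l * A k l j)
    = ∑ m, W m * (∑ j, ∑ k, lcf j k * A k m j)
      + ∑ j, ∑ k, lcf j k * ∑ l, Q k l * P j l := by
  simp only [Finset.mul_sum, mul_add, Finset.sum_add_distrib]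
  rw [add_comm]
  congr 1
  · have hc : ∀ j, ∑ k, ∑ l, lcf j k * (W l * A k l j)
        = ∑ l, ∑ k, lcf j k * (W l * A k l j) := fun j => Finset.sum_comm
    simp only [hc]
    rw [Finset.sum_comm]
    refine Finset.sum_congr rfl fun l _ => Finset.sum_congr rfl fun j _ =>
      Finset.sum_congr rfl fun k _ => by ring
  · refine Finset.sum_congr rfl fun j _ => Finset.sum_congr rfl fun k _ =>
      Finset.sum_congr rfl fun l _ => by ring

/-- Lemma 2.11: if `u` is a divergence-free field and `w = J(u)` is its
mollification by a smooth compactly supported kernel `K`, then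
`curl (J(u)·∇u) = J(u)·∇(curl u) + v`, with
`vⁱ = ε_{ijk} ⟨(∇u)_k, (∇J(u))^j⟩ = ε_{ijk} ∑_l (∂_l u_k)(∂_j J(u)_l)`. -/
theorem curl_mollified_convective
    (u w : (Fin 3 → ℝ) → (Fin 3 → ℝ)) (hu : ContDiff ℝ 2 u)
    (hdiv : ∀ x, ∑ i, pd (fun y => u y i) i x = 0)
    (K : (Fin 3 → ℝ) → ℝ) (hK : ContDiff ℝ (⊤ : ℕ∞) K) (hKc : HasCompactSupport K)
    (hw : ∀ x i, w x i = ∫ y, K (x - y) * u y i) :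
    ∀ x, curl3 (fun y => dirDeriv w u y) x =
      (fun i => dirDeriv w (fun y => curl3 u y) x i +
        ∑ j, ∑ k, lc i j k *
          ∑ l, pd (fun y => u y k) l x * pd (fun y => w y l) j x) := by
  -- smoothness of components of u
  have huk : ∀ k, ContDiff ℝ 2 (fun y => u y k) := fun k => contDiff_pi.mp hu k
  -- smoothness of components of w (convolution with smooth compactly supported kernel)
  have hwl : ∀ l, ContDiff ℝ 1 (fun y => w y l) := by
    intro l
    have h1 : (fun y => w y l)
        = ((fun y => u y l) ⋆[ContinuousLinearMap.mul ℝ ℝ, volume] K) := by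
      funext x
      rw [hw x l, convolution_def]
      simp only [ContinuousLinearMap.mul_apply']
      congr 1; funext y; ring
    rw [h1]
    have hloc : LocallyIntegrable (fun y => u y l) volume :=
      ((continuous_apply l).comp hu.continuous).locallyIntegrable
    exact hKc.contDiff_convolution_right _ hloc (hK.of_le (by simp))
  -- first partials of u are C¹
  have hgdiff : ∀ k l, ContDiff ℝ 1 (fun y => pd (fun z => u z k) l y) := by
    intro k l
    exact ((huk k).fderiv_right (m := 1) le_rfl).clm_apply contDiff_const
  intro x
  -- second derivative abbreviation and its properties
  set A : Fin 3 → Fin 3 → Fin 3 → ℝ := fun k j l =>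
    fderiv ℝ (fderiv ℝ (fun y => u y k)) x (Pi.single j 1) (Pi.single l 1) with hA
  have hpdg : ∀ k l j, pd (fun y => pd (fun z => u z k) l y) j x = A k j l := by
    intro k l j
    have hdc : DifferentiableAt ℝ (fderiv ℝ (fun y => u y k)) x :=
      (((huk k).fderiv_right (m := 1) le_rfl).differentiable one_ne_zero) x
    show fderiv ℝ (fun y => fderiv ℝ (fun z => u z k) y (Pi.single l 1)) x
        (Pi.single j 1) = A k j l
    rw [fderiv_clm_apply hdc (differentiableAt_const _)]
    simp [hA]
  have hAsymm : ∀ k j l, A k j l = A k l j := by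
    intro k j l
    exact ((huk k).contDiffAt.isSymmSndFDerivAt (by simp)) (Pi.single j 1) (Pi.single l 1)
  -- key computation 1: derivative of the convective term
  have key1 : ∀ k j, pd (fun y => dirDeriv w u y k) j x
      = ∑ l, (pd (fun y => w y l) j x * pd (fun z => u z k) l x + w x l * A k l j) := by
    intro k j
    have hrw : (fun y => dirDeriv w u y k)
        = fun y => ∑ l, w y l * pd (fun z => u z k) l y := by
      funext y
      exact fderiv_pi_apply' _ _ _
    rw [hrw]
    show fderiv ℝ (fun y => ∑ l, w y l * pd (fun z => u z k) l y) x (Pi.single j 1) = _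
    rw [fderiv_fun_sum (A := fun l y => w y l * pd (fun z => u z k) l y) (fun l _ => ((hwl l).differentiable one_ne_zero x).mul
      ((hgdiff k l).differentiable one_ne_zero x))]
    rw [ContinuousLinearMap.sum_apply]
    refine Finset.sum_congr rfl fun l _ => ?_
    rw [fderiv_fun_mul ((hwl l).differentiable one_ne_zero x)
      ((hgdiff k l).differentiable one_ne_zero x)]
    rw [ContinuousLinearMap.add_apply, ContinuousLinearMap.smul_apply,
      ContinuousLinearMap.smul_apply, smul_eq_mul, smul_eq_mul]
    have h1 : fderiv ℝ (fun y => pd (fun z => u z k) l y) x (Pi.single j 1) = A k l j := by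
      rw [show fderiv ℝ (fun y => pd (fun z => u z k) l y) x (Pi.single j 1)
          = pd (fun y => pd (fun z => u z k) l y) j x from rfl, hpdg, hAsymm]
    rw [h1]
    show w x l * A k l j + pd (fun z => u z k) l x * pd (fun y => w y l) j x = _
    ring
  -- key computation 2: derivative of the curl
  have key2 : ∀ i m, pd (fun y => curl3 u y i) m x
      = ∑ j, ∑ k, lc i j k * A k m j := by
    intro i m
    show fderiv ℝ (fun y => ∑ j, ∑ k, lc i j k * pd (fun z => u z k) j y) x
      (Pi.single m 1) = _
    rw [fderiv_fun_sum (fun j _ => DifferentiableAt.fun_sum (fun k _ =>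
      ((hgdiff k j).differentiable one_ne_zero x).const_mul (lc i j k)))]
    rw [ContinuousLinearMap.sum_apply]
    refine Finset.sum_congr rfl fun j _ => ?_
    rw [fderiv_fun_sum (fun k _ =>
      ((hgdiff k j).differentiable one_ne_zero x).const_mul (lc i j k))]
    rw [ContinuousLinearMap.sum_apply]
    refine Finset.sum_congr rfl fun k _ => ?_
    rw [fderiv_const_mul ((hgdiff k j).differentiable one_ne_zero x)]
    rw [ContinuousLinearMap.smul_apply, smul_eq_mul]
    congr 1
    exact hpdg k j m
  funext i
  have hdd : dirDeriv w (fun y => curl3 u y) x i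
      = ∑ m, w x m * (∑ j, ∑ k, lc i j k * A k m j) := by
    show fderiv ℝ (fun y => curl3 u y i) x (w x) = _
    rw [fderiv_pi_apply']
    exact Finset.sum_congr rfl fun m _ => by rw [key2 i m]
  show ∑ j, ∑ k, lc i j k * pd (fun y => dirDeriv w u y k) j x = _
  rw [hdd]
  simp only [key1]
  exact sum_rearrange' (fun j k => lc i j k)
    (fun j l => pd (fun y => w y l) j x)
    (fun k l => pd (fun z => u z k) l x) (w x) A
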